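/- arXiv:1511.06257 — 3 statements merged into one kernel-verified Lean document; each statement's English description precedes it below -/
import Mathlib

section
/- Let s > 0 and d₁, d₂ ≥ 1, and let a : ℕ^{d₂} × ℕ^{d₁} → ℂ satisfy: for every r > 0 there is C_r > 0 with |a(α,β)| ≤ C_r e^{−r(|α|^{1/(2s)} + |β|^{1/(2s)})} for all α, β. Then for every f : ℕ^{d₁} → ℂ for which there exist ρ₀ > 0 and C > 0 with |f(β)| ≤ C e^{ρ₀|β|^{1/(2s)}} for all β, the series (Af)(α) = ∑_β a(α,β) f(β) converges absolutely for every α ∈ ℕ^{d₂}, and for every r > 0 there is C'_r > 0 with |(Af)(α)| ≤ C'_r e^{−r|α|^{1/(2s)}} for all α. -/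
/-!
Both conditions are bounds in the weight `w(γ) = |γ|^{1/(2s)}`. Since the decay of `a` holds for
every rate, spend the rate `r + ρ₀ + 1`: the factor `e^{ρ₀ w(β)}` in the growth of `f` is absorbed,
and `|a(α,β) f(β)| ≤ K e^{-r w(α)} e^{-w(β)}`. The sum of `e^{-w(β)}` over `ℕ^d` is finite, since
`e^{-w(β)}` is dominated by a product of one-dimensional terms `e^{-c β_i^{1/(2s)}}`, each decaying
faster than `n^{-2}`.
-/

/-- `|α| = α₁ + ⋯ + α_d` as a real number. -/
noncomputable def msz {d : ℕ} (α : Fin d → ℕ) : ℝ := (∑ i, α i : ℕ)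

open Real Filter Asymptotics

lemma summable_exp_neg_mul_rpow {c ε : ℝ} (hc : 0 < c) (hε : 0 < ε) :
    Summable fun n : ℕ => exp (-(c * (n : ℝ) ^ ε)) := by
  have hdecay : (fun t : ℝ => exp (-c * t)) =o[atTop] fun t => t ^ (-2 / ε) :=
    isLittleO_exp_neg_mul_rpow_atTop hc _
  have hlim : Tendsto (fun n : ℕ => (n : ℝ) ^ ε) atTop atTop :=
    (tendsto_rpow_atTop hε).comp tendsto_natCast_atTop_atTop
  refine summable_of_isBigO_nat (Real.summable_nat_rpow.mpr (by norm_num : (-2 : ℝ) < -1)) ?_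
  refine (hdecay.comp_tendsto hlim).isBigO.congr (fun n => by simp [neg_mul]) fun n => ?_
  rw [Function.comp_apply, ← Real.rpow_mul (Nat.cast_nonneg n), mul_div_cancel₀ _ hε.ne']

lemma summable_prod_apply_of_nonneg {κ : Type*} {g : κ → ℝ} (hg₀ : 0 ≤ g) (hg : Summable g) :
    ∀ d : ℕ, Summable fun β : Fin d → κ => ∏ i, g (β i)
  | 0 => (hasSum_fintype _).summable
  | d + 1 => by
    have hprod := hg.mul_of_nonneg (summable_prod_apply_of_nonneg hg₀ hg d) hg₀
      fun β => Finset.prod_nonneg fun i _ => hg₀ _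
    rw [← (Fin.consEquiv fun _ : Fin (d + 1) => κ).summable_iff]
    refine hprod.congr fun p => ?_
    simp [Fin.prod_univ_succ]

lemma apply_le_msz {d : ℕ} (β : Fin d → ℕ) (i : Fin d) : (β i : ℝ) ≤ msz β := by
  unfold msz
  exact_mod_cast Finset.single_le_sum (fun j _ => Nat.zero_le (β j)) (Finset.mem_univ i)

lemma summable_exp_neg_msz_rpow (d : ℕ) {ε : ℝ} (hε : 0 < ε) :
    Summable fun β : Fin d → ℕ => exp (-(msz β ^ ε)) := by
  set c : ℝ := ((d : ℝ) + 1)⁻¹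
  have hc : 0 < c := by positivity
  refine (summable_prod_apply_of_nonneg (fun n => (exp_pos _).le)
    (summable_exp_neg_mul_rpow hc hε) d).of_nonneg_of_le (fun β => (exp_pos _).le) fun β => ?_
  rw [← exp_sum, exp_le_exp, Finset.sum_neg_distrib, neg_le_neg_iff]
  calc ∑ i, c * (β i : ℝ) ^ ε ≤ ∑ _i : Fin d, c * msz β ^ ε := by
        gcongr with i; exact apply_le_msz β i
    _ = (d * c) * msz β ^ ε := by simp [mul_assoc]
    _ ≤ 1 * msz β ^ ε := by
        gcongr
        · exact rpow_nonneg (Nat.cast_nonneg _) _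
        · rw [← div_eq_mul_inv, div_le_one (by positivity)]; linarith
    _ = msz β ^ ε := one_mul _

lemma exp_neg_mul_add_mul_exp_mul_le {r ρ x y : ℝ} (hr : 0 ≤ r) (hρ : 0 ≤ ρ) (hx : 0 ≤ x)
    (hy : 0 ≤ y) : exp (-((r + ρ + 1) * (x + y))) * exp (ρ * y) ≤ exp (-(r * x)) * exp (-y) := by
  rw [← exp_add, ← exp_add, exp_le_exp]
  nlinarith [mul_nonneg hr hy, mul_nonneg hρ hx]

section WeightedBounds

variable {ι κ E : Type*} [NormedRing E] {a : ι → κ → E} {f : κ → E} {u : ι → ℝ} {v : κ → ℝ}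
  {ρ C : ℝ}

lemma exists_norm_mul_le_exp_mul_exp (hu : 0 ≤ u) (hv : 0 ≤ v)
    (ha : ∀ r > 0, ∃ C > 0, ∀ α β, ‖a α β‖ ≤ C * exp (-(r * (u α + v β))))
    (hρ : 0 ≤ ρ) (hC : 0 ≤ C) (hf : ∀ β, ‖f β‖ ≤ C * exp (ρ * v β)) {r : ℝ} (hr : 0 ≤ r) :
    ∃ K ≥ 0, ∀ α β, ‖a α β * f β‖ ≤ K * exp (-(r * u α)) * exp (-v β) := by
  obtain ⟨C₁, hC₁, ha⟩ := ha (r + ρ + 1) (by linarith)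
  refine ⟨C₁ * C, by positivity, fun α β => ?_⟩
  calc ‖a α β * f β‖ ≤ ‖a α β‖ * ‖f β‖ := norm_mul_le _ _
    _ ≤ C₁ * exp (-((r + ρ + 1) * (u α + v β))) * (C * exp (ρ * v β)) := by
        gcongr
        · exact ha α β
        · exact hf β
    _ = C₁ * C * (exp (-((r + ρ + 1) * (u α + v β))) * exp (ρ * v β)) := by ring
    _ ≤ C₁ * C * (exp (-(r * u α)) * exp (-v β)) :=
        mul_le_mul_of_nonneg_left (exp_neg_mul_add_mul_exp_mul_le hr hρ (hu α) (hv β))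
          (by positivity)
    _ = C₁ * C * exp (-(r * u α)) * exp (-v β) := by ring

lemma summable_norm_mul_of_decay_of_growth (hu : 0 ≤ u) (hv : 0 ≤ v)
    (hS : Summable fun β => exp (-v β))
    (ha : ∀ r > 0, ∃ C > 0, ∀ α β, ‖a α β‖ ≤ C * exp (-(r * (u α + v β))))
    (hρ : 0 ≤ ρ) (hC : 0 ≤ C) (hf : ∀ β, ‖f β‖ ≤ C * exp (ρ * v β)) (α : ι) :
    Summable fun β => ‖a α β * f β‖ := by
  obtain ⟨K, -, hK⟩ := exists_norm_mul_le_exp_mul_exp hu hv ha hρ hC hf le_rfl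
  exact (hS.mul_left _).of_nonneg_of_le (fun β => norm_nonneg _) (hK α)

lemma exists_norm_tsum_mul_le_of_decay_of_growth (hu : 0 ≤ u) (hv : 0 ≤ v)
    (hS : Summable fun β => exp (-v β))
    (ha : ∀ r > 0, ∃ C > 0, ∀ α β, ‖a α β‖ ≤ C * exp (-(r * (u α + v β))))
    (hρ : 0 ≤ ρ) (hC : 0 ≤ C) (hf : ∀ β, ‖f β‖ ≤ C * exp (ρ * v β)) {r : ℝ} (hr : 0 ≤ r) :
    ∃ C' > 0, ∀ α, ‖∑' β, a α β * f β‖ ≤ C' * exp (-(r * u α)) := by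
  obtain ⟨K, hK₀, hK⟩ := exists_norm_mul_le_exp_mul_exp hu hv ha hρ hC hf hr
  set S := ∑' β, exp (-v β)
  have hS₀ : 0 ≤ S := tsum_nonneg fun β => (exp_pos _).le
  refine ⟨K * S + 1, by positivity, fun α => ?_⟩
  have hsum := summable_norm_mul_of_decay_of_growth hu hv hS ha hρ hC hf α
  calc ‖∑' β, a α β * f β‖ ≤ ∑' β, ‖a α β * f β‖ := norm_tsum_le_tsum_norm hsum
    _ ≤ ∑' β, K * exp (-(r * u α)) * exp (-v β) := hsum.tsum_le_tsum (hK α) (hS.mul_left _)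
    _ = K * S * exp (-(r * u α)) := by rw [tsum_mul_left]; ring
    _ ≤ (K * S + 1) * exp (-(r * u α)) := by gcongr; linarith

end WeightedBounds

theorem stmt4_general
    (s : ℝ) (hs : 0 < s) (d₁ d₂ : ℕ)
    (a : (Fin d₂ → ℕ) → (Fin d₁ → ℕ) → ℂ)
    (ha : ∀ r > (0:ℝ), ∃ C > (0:ℝ), ∀ (α : Fin d₂ → ℕ) (β : Fin d₁ → ℕ),
      ‖a α β‖ ≤ C * Real.exp (-(r * (msz α ^ (1/(2*s)) + msz β ^ (1/(2*s))))))
    (f : (Fin d₁ → ℕ) → ℂ)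
    (hf : ∃ ρ₀ > (0:ℝ), ∃ C > (0:ℝ), ∀ β : Fin d₁ → ℕ,
      ‖f β‖ ≤ C * Real.exp (ρ₀ * msz β ^ (1/(2*s)))) :
    (∀ α : Fin d₂ → ℕ, Summable fun β => ‖a α β * f β‖) ∧
    (∀ r > (0:ℝ), ∃ C' > (0:ℝ), ∀ α : Fin d₂ → ℕ,
      ‖∑' β, a α β * f β‖ ≤ C' * Real.exp (-(r * msz α ^ (1/(2*s))))) := by
  obtain ⟨ρ₀, hρ₀, C, hC, hf⟩ := hf
  have hweight {d : ℕ} : 0 ≤ fun γ : Fin d → ℕ => msz γ ^ (1/(2*s)) :=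
    fun γ => rpow_nonneg (Nat.cast_nonneg _) _
  have hS := summable_exp_neg_msz_rpow d₁ (by positivity : 0 < 1/(2*s))
  exact ⟨summable_norm_mul_of_decay_of_growth hweight hweight hS ha hρ₀.le hC.le hf,
    fun r hr => exists_norm_tsum_mul_le_of_decay_of_growth hweight hweight hS ha hρ₀.le hC.le hf
      hr.le⟩

/-- A matrix in `ℓ_{0,s}` (Beurling decay: for every `r > 0`) maps `ℓ_{0,s}'`
(exponential growth of some order `ρ₀ > 0`) into `ℓ_{0,s}`: the series
`(Af)(α) = ∑_β a(α,β) f(β)` converges absolutely and for every `r > 0` it is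
`O(e^{-r|α|^{1/(2s)}})`. -/
theorem stmt4
    (s : ℝ) (hs : 0 < s) (d₁ d₂ : ℕ) (hd₁ : 1 ≤ d₁) (hd₂ : 1 ≤ d₂)
    (a : (Fin d₂ → ℕ) → (Fin d₁ → ℕ) → ℂ)
    (ha : ∀ r > (0:ℝ), ∃ C > (0:ℝ), ∀ (α : Fin d₂ → ℕ) (β : Fin d₁ → ℕ),
      ‖a α β‖ ≤ C * Real.exp (-(r * (msz α ^ (1/(2*s)) + msz β ^ (1/(2*s))))))
    (f : (Fin d₁ → ℕ) → ℂ)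
    (hf : ∃ ρ₀ > (0:ℝ), ∃ C > (0:ℝ), ∀ β : Fin d₁ → ℕ,
      ‖f β‖ ≤ C * Real.exp (ρ₀ * msz β ^ (1/(2*s)))) :
    (∀ α : Fin d₂ → ℕ, Summable fun β => ‖a α β * f β‖) ∧
    (∀ r > (0:ℝ), ∃ C' > (0:ℝ), ∀ α : Fin d₂ → ℕ,
      ‖∑' β, a α β * f β‖ ≤ C' * Real.exp (-(r * msz α ^ (1/(2*s))))) :=
  stmt4_general s hs d₁ d₂ a ha f hf
end

section
/- Let σ > 0 and d₁, d₂ ≥ 1, and let a : ℕ^{d₂} × ℕ^{d₁} → ℂ satisfy: for every ε > 0 there is C_ε > 0 with |a(α,β)| ≤ C_ε ε^{|α|+|β|} (α! β!)^{−1/(2σ)} for all α, β. Then there exist strictly positive families (λ_β)_{β∈ℕ^{d₁}} and (μ_α)_{α∈ℕ^{d₂}} and a matrix a₀ : ℕ^{d₂} × ℕ^{d₁} → ℂ, such that a(α,β) = μ_α · a₀(α,β) · λ_β for all α, β, and such that: for every ε > 0 there is C_ε' > 0 with λ_β ≤ C_ε' ε^{|β|} (β!)^{−1/(2σ)} and μ_α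 ≤ C_ε' ε^{|α|} (α!)^{−1/(2σ)}, and for every c > 0 there is C_c > 0 with |a₀(α,β)| ≤ C_c e^{−c(|α|+|β|)}. (Hence the operator with matrix a factorizes as Λ₂ ∘ A₀ ∘ Λ₁ with Λ₁, Λ₂ positive diagonal operators whose diagonal kernels lie in the class 𝓗_{0,♭_{2σ}}, and A₀ with kernel in the class 𝓗_{0,1/2}.) -/
/-- `|α| = α₁ + ⋯ + α_d`. -/
def msznat {d : ℕ} (α : Fin d → ℕ) : ℕ := ∑ i, α i

/-- `α! = α₁!⋯α_d!` as a real number. -/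
noncomputable def mfact {d : ℕ} (α : Fin d → ℕ) : ℝ := ∏ i, (Nat.factorial (α i) : ℝ)

/-!
Take the constant `C_j` of the hypothesis at `ε = e^{-(j+1)}` and an index `N(k) → ∞` growing so
slowly that `C_{N(k)} ≤ K e^k`. Then `g(k) = exp(-k N(k)/2)` is submultiplicative, decays faster
than every exponential, and `|a(α,β)| ≤ K g(|α|+|β|)² (α!β!)^{-1/(2σ)}`. One factor `g` goes into
the diagonal weights `λ_β = g(|β|) (β!)^{-1/(2σ)}`, `μ_α = g(|α|) (α!)^{-1/(2σ)}`; since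
`g(|α|+|β|) ≤ g(|α|) g(|β|)`, the other one still bounds `a₀`.
-/

open Filter Real

theorem mfact_pos {d : ℕ} (α : Fin d → ℕ) : 0 < mfact α :=
  Finset.prod_pos fun i _ => by positivity

theorem exists_monotone_tendsto_atTop_le_max (C u : ℕ → ℝ) (hu : Monotone u)
    (hu_top : Tendsto u atTop atTop) :
    ∃ N : ℕ → ℕ, Monotone N ∧ Tendsto N atTop atTop ∧ ∀ n, C (N n) ≤ max (C 0) (u n) := by
  classical
  refine ⟨fun n => Nat.findGreatest (fun j => C j ≤ u n) n, ?_, ?_, fun n => ?_⟩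
  · exact fun m n hmn => Nat.findGreatest_mono (fun j hj => hj.trans (hu hmn)) hmn
  · refine tendsto_atTop.2 fun M => ?_
    filter_upwards [eventually_ge_atTop M, hu_top.eventually_ge_atTop (C M)] with n hMn hCn
    exact Nat.le_findGreatest hMn hCn
  · rcases eq_or_ne (Nat.findGreatest (fun j => C j ≤ u n) n) 0 with h0 | hne
    · simp only [h0, le_max_left]
    · exact (Nat.findGreatest_of_ne_zero rfl hne).trans (le_max_right _ _)

theorem exists_pos_forall_le_mul_pow_of_eventually_le {g : ℕ → ℝ} {ε : ℝ} (hg : 0 ≤ g)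
    (hε : 0 < ε) (h : ∀ᶠ k in atTop, g k ≤ ε ^ k) : ∃ C > 0, ∀ k, g k ≤ C * ε ^ k := by
  have hO : g =O[atTop] (ε ^ ·) := Asymptotics.IsBigO.of_bound 1 <| h.mono fun k hk => by
    rwa [norm_of_nonneg (hg k), norm_of_nonneg (by positivity), one_mul]
  obtain ⟨C, hC, hCg⟩ := Asymptotics.bound_of_isBigO_nat_atTop hO
  refine ⟨C, hC, fun k => ?_⟩
  simpa only [norm_of_nonneg (hg k), norm_of_nonneg (pow_pos hε k).le] using
    hCg (pow_ne_zero k hε.ne')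

theorem exists_submultiplicative_sq_bound {ι : Type*} (s : ι → ℕ) (f w : ι → ℝ)
    (hw : ∀ i, 0 ≤ w i) (hf : ∀ ε > 0, ∃ C, ∀ i, f i ≤ C * ε ^ s i * w i) :
    ∃ g : ℕ → ℝ, (∀ k, 0 < g k) ∧ (∀ m n, g (m + n) ≤ g m * g n) ∧
      (∀ ε > 0, ∃ C > 0, ∀ k, g k ≤ C * ε ^ k) ∧
      ∃ K > 0, ∀ i, f i ≤ K * g (s i) ^ 2 * w i := by
  choose C hC using fun j : ℕ => hf (exp (-(j + 1))) (exp_pos _)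
  obtain ⟨N, hN_mono, hN_top, hCN⟩ := exists_monotone_tendsto_atTop_le_max C (fun n => exp n)
    (exp_monotone.comp Nat.mono_cast) (tendsto_exp_atTop.comp tendsto_natCast_atTop_atTop)
  refine ⟨fun k => exp (-(k * N k) / 2), fun k => exp_pos _, fun m n => ?_, fun ε hε => ?_,
    max (C 0) 1, by positivity, fun i => ?_⟩
  · have hm : (N m : ℝ) ≤ N (m + n) := Nat.cast_le.2 (hN_mono (Nat.le_add_right m n))
    have hn : (N n : ℝ) ≤ N (m + n) := Nat.cast_le.2 (hN_mono (Nat.le_add_left n m))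
    rw [← exp_add, exp_le_exp]
    push_cast
    nlinarith [(m.cast_nonneg : (0 : ℝ) ≤ m), (n.cast_nonneg : (0 : ℝ) ≤ n)]
  · obtain ⟨M, hM⟩ := exists_nat_gt (-2 * log ε)
    refine exists_pos_forall_le_mul_pow_of_eventually_le (fun k => (exp_pos _).le) hε ?_
    filter_upwards [hN_top.eventually_ge_atTop M] with k hk
    have hMk : (M : ℝ) ≤ N k := Nat.cast_le.2 hk
    calc exp (-(k * N k) / 2) ≤ exp (-M / 2) ^ k := by
          rw [← exp_nat_mul, exp_le_exp]
          nlinarith [(k.cast_nonneg : (0 : ℝ) ≤ k)]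
      _ ≤ exp (log ε) ^ k := by gcongr; linarith
      _ = ε ^ k := by rw [exp_log hε]
  · set k := s i
    have hCk : C (N k) ≤ max (C 0) 1 * exp k := by
      have h1 : (1 : ℝ) ≤ exp k := one_le_exp k.cast_nonneg
      refine (hCN k).trans (max_le ?_ ?_) <;> nlinarith [le_max_left (C 0) 1, le_max_right (C 0) 1]
    -- the `+ 1` in `ε = e^{-(j+1)}` absorbs the growth `e^k` of `C_{N(k)}`
    calc f i ≤ C (N k) * exp (-(N k + 1)) ^ k * w i := hC (N k) i
      _ ≤ max (C 0) 1 * exp k * exp (-(N k + 1)) ^ k * w i := by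
          gcongr; exact hw i
      _ = max (C 0) 1 * exp (-(k * N k) / 2) ^ 2 * w i := by
          rw [← exp_nat_mul, ← exp_nat_mul, mul_assoc (max _ _), ← exp_add]
          ring_nf

noncomputable def diagWeight (g : ℕ → ℝ) (r : ℝ) {d : ℕ} (α : Fin d → ℕ) : ℝ :=
  g (msznat α) * mfact α ^ r

section diagWeight

variable {g : ℕ → ℝ} {r : ℝ}

theorem diagWeight_pos (hg : ∀ k, 0 < g k) {d : ℕ} (α : Fin d → ℕ) : 0 < diagWeight g r α :=
  mul_pos (hg _) (rpow_pos_of_pos (mfact_pos α) r)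

theorem diagWeight_le {C ε : ℝ} (hg : ∀ k, g k ≤ C * ε ^ k) {d : ℕ} (α : Fin d → ℕ) :
    diagWeight g r α ≤ C * ε ^ msznat α * mfact α ^ r :=
  mul_le_mul_of_nonneg_right (hg _) (rpow_nonneg (mfact_pos α).le r)

theorem norm_div_diagWeight_mul_le (hg_pos : ∀ k, 0 < g k) (hg_mul : ∀ m n, g (m + n) ≤ g m * g n)
    {K : ℝ} (hK : 0 ≤ K) {d₁ d₂ : ℕ} {α : Fin d₂ → ℕ} {β : Fin d₁ → ℕ} {x : ℂ}
    (hx : ‖x‖ ≤ K * g (msznat α + msznat β) ^ 2 * (mfact α * mfact β) ^ r) :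
    ‖x / ((diagWeight g r α : ℂ) * (diagWeight g r β : ℂ))‖ ≤ K * g (msznat α + msznat β) := by
  have hWα := diagWeight_pos (r := r) hg_pos α
  have hWβ := diagWeight_pos (r := r) hg_pos β
  have hW : g (msznat α + msznat β) * (mfact α * mfact β) ^ r ≤
      diagWeight g r α * diagWeight g r β := by
    rw [mul_rpow (mfact_pos α).le (mfact_pos β).le, diagWeight, diagWeight,
      mul_mul_mul_comm]
    exact mul_le_mul_of_nonneg_right (hg_mul _ _)
      (mul_nonneg (rpow_nonneg (mfact_pos α).le r) (rpow_nonneg (mfact_pos β).le r))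
  rw [norm_div, norm_mul, Complex.norm_real, Complex.norm_real, norm_of_nonneg hWα.le,
    norm_of_nonneg hWβ.le, div_le_iff₀ (by positivity)]
  calc ‖x‖ ≤ K * g (msznat α + msznat β) * (g (msznat α + msznat β) * (mfact α * mfact β) ^ r) :=
        hx.trans_eq (by ring)
    _ ≤ K * g (msznat α + msznat β) * (diagWeight g r α * diagWeight g r β) := by
        gcongr
        exact mul_nonneg hK (hg_pos _).le

end diagWeight

theorem stmt8_general
    (σ : ℝ) (d₁ d₂ : ℕ)
    (a : (Fin d₂ → ℕ) → (Fin d₁ → ℕ) → ℂ)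
    (ha : ∀ ε > (0:ℝ), ∃ C > (0:ℝ), ∀ (α : Fin d₂ → ℕ) (β : Fin d₁ → ℕ),
      ‖a α β‖ ≤ C * ε ^ (msznat α + msznat β) * (mfact α * mfact β) ^ (-(1/(2*σ)))) :
    ∃ lam : (Fin d₁ → ℕ) → ℝ, ∃ mu : (Fin d₂ → ℕ) → ℝ,
    ∃ a₀ : (Fin d₂ → ℕ) → (Fin d₁ → ℕ) → ℂ,
      (∀ β, 0 < lam β) ∧ (∀ α, 0 < mu α) ∧
      (∀ (α : Fin d₂ → ℕ) (β : Fin d₁ → ℕ),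
        a α β = (mu α : ℂ) * a₀ α β * (lam β : ℂ)) ∧
      (∀ ε > (0:ℝ), ∃ C' > (0:ℝ),
        (∀ β : Fin d₁ → ℕ, lam β ≤ C' * ε ^ msznat β * mfact β ^ (-(1/(2*σ)))) ∧
        (∀ α : Fin d₂ → ℕ, mu α ≤ C' * ε ^ msznat α * mfact α ^ (-(1/(2*σ))))) ∧
      (∀ c > (0:ℝ), ∃ C > (0:ℝ), ∀ (α : Fin d₂ → ℕ) (β : Fin d₁ → ℕ),
        ‖a₀ α β‖ ≤ C * Real.exp (-(c * (msznat α + msznat β : ℕ)))) := by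
  obtain ⟨g, hg_pos, hg_mul, hg_decay, K, hK, haK⟩ := exists_submultiplicative_sq_bound
    (fun p : (Fin d₂ → ℕ) × (Fin d₁ → ℕ) => msznat p.1 + msznat p.2) (fun p => ‖a p.1 p.2‖)
    (fun p => (mfact p.1 * mfact p.2) ^ (-(1/(2*σ))))
    (fun p => rpow_nonneg (mul_pos (mfact_pos p.1) (mfact_pos p.2)).le _)
    (fun ε hε => by obtain ⟨C, -, hC⟩ := ha ε hε; exact ⟨C, fun p => hC p.1 p.2⟩)
  refine ⟨diagWeight g (-(1/(2*σ))), diagWeight g (-(1/(2*σ))),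
    fun α β => a α β / ((diagWeight g (-(1/(2*σ))) α : ℂ) * (diagWeight g (-(1/(2*σ))) β : ℂ)),
    diagWeight_pos hg_pos, diagWeight_pos hg_pos, fun α β => ?_, fun ε hε => ?_, fun c _ => ?_⟩
  · have hα := Complex.ofReal_ne_zero.2 (diagWeight_pos (r := -(1/(2*σ))) hg_pos α).ne'
    have hβ := Complex.ofReal_ne_zero.2 (diagWeight_pos (r := -(1/(2*σ))) hg_pos β).ne'
    field_simp
  · obtain ⟨C, hC, hgC⟩ := hg_decay ε hε
    exact ⟨C, hC, diagWeight_le hgC, diagWeight_le hgC⟩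
  · obtain ⟨C, hC, hgC⟩ := hg_decay (exp (-c)) (exp_pos _)
    refine ⟨K * C, mul_pos hK hC, fun α β => ?_⟩
    calc _ ≤ K * g (msznat α + msznat β) :=
          norm_div_diagWeight_mul_le hg_pos hg_mul hK.le (haK (α, β))
      _ ≤ K * (C * exp (-c) ^ (msznat α + msznat β)) := by gcongr; exact hgC _
      _ = K * C * exp (-(c * (msznat α + msznat β : ℕ))) := by
          rw [← exp_nat_mul]; ring_nf

/-- Factorization of a matrix of class `𝓗_{0,♭_σ}`: if for every `ε > 0`
one has `|a(α,β)| ≤ C_ε ε^{|α|+|β|} (α!β!)^{-1/(2σ)}`, then `a(α,β) = μ_α · a₀(α,β) · λ_β`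
where the strictly positive diagonals satisfy, for every `ε > 0`,
`λ_β ≤ C_ε' ε^{|β|} (β!)^{-1/(2σ)}` and `μ_α ≤ C_ε' ε^{|α|} (α!)^{-1/(2σ)}`
(class `𝓗_{0,♭_{2σ}}` diagonal kernels), and for every `c > 0`,
`|a₀(α,β)| ≤ C_c e^{-c(|α|+|β|)}` (class `𝓗_{0,1/2}`). -/
theorem stmt8
    (σ : ℝ) (hσ : 0 < σ) (d₁ d₂ : ℕ) (hd₁ : 1 ≤ d₁) (hd₂ : 1 ≤ d₂)
    (a : (Fin d₂ → ℕ) → (Fin d₁ → ℕ) → ℂ)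
    (ha : ∀ ε > (0:ℝ), ∃ C > (0:ℝ), ∀ (α : Fin d₂ → ℕ) (β : Fin d₁ → ℕ),
      ‖a α β‖ ≤ C * ε ^ (msznat α + msznat β) * (mfact α * mfact β) ^ (-(1/(2*σ)))) :
    ∃ lam : (Fin d₁ → ℕ) → ℝ, ∃ mu : (Fin d₂ → ℕ) → ℝ,
    ∃ a₀ : (Fin d₂ → ℕ) → (Fin d₁ → ℕ) → ℂ,
      (∀ β, 0 < lam β) ∧ (∀ α, 0 < mu α) ∧
      (∀ (α : Fin d₂ → ℕ) (β : Fin d₁ → ℕ),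
        a α β = (mu α : ℂ) * a₀ α β * (lam β : ℂ)) ∧
      (∀ ε > (0:ℝ), ∃ C' > (0:ℝ),
        (∀ β : Fin d₁ → ℕ, lam β ≤ C' * ε ^ msznat β * mfact β ^ (-(1/(2*σ)))) ∧
        (∀ α : Fin d₂ → ℕ, mu α ≤ C' * ε ^ msznat α * mfact α ^ (-(1/(2*σ))))) ∧
      (∀ c > (0:ℝ), ∃ C > (0:ℝ), ∀ (α : Fin d₂ → ℕ) (β : Fin d₁ → ℕ),
        ‖a₀ α β‖ ≤ C * Real.exp (-(c * (msznat α + msznat β : ℕ)))) :=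
  stmt8_general σ d₁ d₂ a ha
end

section
/- Let s > 0, d₁, d₂ ≥ 1, C > 0, h > 0, and let c : ℕ^{d₂} × ℕ^{d₁} → ℂ. Assume that for all integers N₁, N₂ ≥ 0: (∑_{α,β} (2|β| + d₁)^{2N₁} (2|α| + d₂)^{2N₂} |c(α,β)|²)^{1/2} ≤ C h^{N₁ + N₂} (N₁! N₂!)^{2s}. Then for every integer N ≥ 0: (∑_{α,β} (2|α| + 2|β| + d₁ + d₂)^{2N} |c(α,β)|²)^{1/2} ≤ C (2h)^N (N!)^{2s}. -/
/-!
Writing `A = 2|β| + d₁` and `B = 2|α| + d₂`, the weight `(A + B)^N |c|` is the binomial sum of the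
functions `(N choose k) A^k B^(N-k) |c|`. Minkowski's inequality in `ℓ²` bounds the joint norm by
`∑ₖ (N choose k) ‖A^k B^(N-k) c‖`; each of these is at most `C h^N (N!)^(2s)` because
`k! (N-k)! ≤ N!`, and `∑ₖ (N choose k) = 2^N`.
-/

open scoped Nat

section Ell2

variable {ι : Type*}

theorem memℓp_two_iff_summable_sq {f : ι → ℝ} : Memℓp f 2 ↔ Summable fun i => f i ^ 2 := by
  simp [memℓp_gen_iff (p := 2) (by norm_num), Real.norm_eq_abs, sq_abs]

theorem lp.norm_two_eq_sqrt_tsum_sq (x : lp (fun _ : ι => ℝ) 2) : ‖x‖ = √(∑' i, x i ^ 2) := by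
  simp [lp.norm_eq_tsum_rpow (p := 2) (by norm_num), Real.sqrt_eq_rpow, Real.norm_eq_abs, sq_abs]

theorem sqrt_tsum_sq_finset_sum_le {κ : Type*} (t : Finset κ) (f : κ → ι → ℝ)
    (hf : ∀ k ∈ t, Summable fun i => f k i ^ 2) :
    (Summable fun i => (∑ k ∈ t, f k i) ^ 2) ∧
      √(∑' i, (∑ k ∈ t, f k i) ^ 2) ≤ ∑ k ∈ t, √(∑' i, f k i ^ 2) := by
  let u : t → lp (fun _ : ι => ℝ) 2 := fun k => ⟨f k, memℓp_two_iff_summable_sq.2 (hf k k.2)⟩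
  have hu : ⇑(∑ k, u k) = fun i => ∑ k ∈ t, f k i := by
    ext i
    rw [lp.coeFn_sum, Finset.sum_apply]
    exact Finset.sum_coe_sort t fun k => f k i
  refine ⟨memℓp_two_iff_summable_sq.1 (by rw [← hu]; exact lp.memℓp _), ?_⟩
  calc √(∑' i, (∑ k ∈ t, f k i) ^ 2) = ‖∑ k, u k‖ := by rw [lp.norm_two_eq_sqrt_tsum_sq, hu]
    _ ≤ ∑ k, ‖u k‖ := norm_sum_le _ _
    _ = ∑ k ∈ t, √(∑' i, f k i ^ 2) := by
      simp only [lp.norm_two_eq_sqrt_tsum_sq, u]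
      exact Finset.sum_coe_sort t fun k => √(∑' i, f k i ^ 2)

theorem sqrt_tsum_add_pow_mul_sq_le (a b w : ι → ℝ) (N : ℕ) {M : ℝ}
    (hsum : ∀ k ≤ N, Summable fun i => a i ^ (2 * k) * b i ^ (2 * (N - k)) * w i ^ 2)
    (hle : ∀ k ≤ N, √(∑' i, a i ^ (2 * k) * b i ^ (2 * (N - k)) * w i ^ 2) ≤ M) :
    (Summable fun i => (a i + b i) ^ (2 * N) * w i ^ 2) ∧
      √(∑' i, (a i + b i) ^ (2 * N) * w i ^ 2) ≤ 2 ^ N * M := by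
  set f : ℕ → ι → ℝ := fun k i => N.choose k * (a i ^ k * b i ^ (N - k) * w i)
  have hf_sq : ∀ k i, f k i ^ 2 =
      (N.choose k : ℝ) ^ 2 * (a i ^ (2 * k) * b i ^ (2 * (N - k)) * w i ^ 2) := by
    intro k i
    simp only [f, pow_mul]
    ring
  have hf_sum : ∀ i, (∑ k ∈ Finset.range (N + 1), f k i) ^ 2 = (a i + b i) ^ (2 * N) * w i ^ 2 := by
    intro i
    rw [pow_mul', add_pow, ← mul_pow, Finset.sum_mul]
    congr 1
    refine Finset.sum_congr rfl fun k _ => ?_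
    ring
  have hf_norm : ∀ k, √(∑' i, f k i ^ 2) =
      N.choose k * √(∑' i, a i ^ (2 * k) * b i ^ (2 * (N - k)) * w i ^ 2) := by
    intro k
    simp only [hf_sq, tsum_mul_left]
    rw [Real.sqrt_mul (sq_nonneg _), Real.sqrt_sq (Nat.cast_nonneg _)]
  obtain ⟨hsummable, hminkowski⟩ := sqrt_tsum_sq_finset_sum_le (Finset.range (N + 1)) f
    fun k hk => by
      simp only [hf_sq]
      exact (hsum k (Finset.mem_range_succ_iff.1 hk)).mul_left _
  simp only [hf_sum] at hsummable hminkowski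
  refine ⟨hsummable, hminkowski.trans ?_⟩
  calc ∑ k ∈ Finset.range (N + 1), √(∑' i, f k i ^ 2)
      ≤ ∑ k ∈ Finset.range (N + 1), (N.choose k : ℝ) * M := by
        refine Finset.sum_le_sum fun k hk => ?_
        rw [hf_norm]
        gcongr
        exact hle k (Finset.mem_range_succ_iff.1 hk)
    _ = 2 ^ N * M := by
        rw [← Finset.sum_mul]
        congr 1
        exact_mod_cast Nat.sum_range_choose N

end Ell2

theorem stmt19_general
    (s : ℝ) (hs : 0 < s) (d₁ d₂ : ℕ)
    (C h : ℝ) (hC : 0 < C) (hh : 0 < h)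
    (c : (Fin d₂ → ℕ) → (Fin d₁ → ℕ) → ℂ)
    (hc : ∀ N₁ N₂ : ℕ,
      Summable (fun p : (Fin d₂ → ℕ) × (Fin d₁ → ℕ) =>
        (2 * msz p.2 + d₁) ^ (2*N₁) * (2 * msz p.1 + d₂) ^ (2*N₂) * ‖c p.1 p.2‖^2) ∧
      Real.sqrt (∑' p : (Fin d₂ → ℕ) × (Fin d₁ → ℕ),
          (2 * msz p.2 + d₁) ^ (2*N₁) * (2 * msz p.1 + d₂) ^ (2*N₂) * ‖c p.1 p.2‖^2)
        ≤ C * h ^ (N₁ + N₂) *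
            ((Nat.factorial N₁ : ℝ) * (Nat.factorial N₂ : ℝ)) ^ (2*s)) :
    ∀ N : ℕ,
      Summable (fun p : (Fin d₂ → ℕ) × (Fin d₁ → ℕ) =>
        (2 * msz p.1 + 2 * msz p.2 + d₁ + d₂) ^ (2*N) * ‖c p.1 p.2‖^2) ∧
      Real.sqrt (∑' p : (Fin d₂ → ℕ) × (Fin d₁ → ℕ),
          (2 * msz p.1 + 2 * msz p.2 + d₁ + d₂) ^ (2*N) * ‖c p.1 p.2‖^2)
        ≤ C * (2*h) ^ N * (Nat.factorial N : ℝ) ^ (2*s) := by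
  intro N
  have hsplit : ∀ p : (Fin d₂ → ℕ) × (Fin d₁ → ℕ),
      2 * msz p.1 + 2 * msz p.2 + (d₁ : ℝ) + d₂ = (2 * msz p.2 + d₁) + (2 * msz p.1 + d₂) :=
    fun p => by ring
  have hbound := sqrt_tsum_add_pow_mul_sq_le (ι := (Fin d₂ → ℕ) × (Fin d₁ → ℕ))
    (fun p => 2 * msz p.2 + d₁) (fun p => 2 * msz p.1 + d₂) (fun p => ‖c p.1 p.2‖) N
    (M := C * h ^ N * (N ! : ℝ) ^ (2 * s)) (fun k _ => (hc k (N - k)).1) fun k hk => by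
      refine (hc k (N - k)).2.trans ?_
      rw [Nat.add_sub_cancel' hk]
      gcongr
      exact_mod_cast Nat.le_of_dvd N.factorial_pos (Nat.factorial_mul_factorial_dvd_factorial hk)
  simp only [hsplit]
  refine ⟨hbound.1, hbound.2.trans_eq ?_⟩
  ring

/-- If the Hermite coefficients `c` satisfy the separate
harmonic-oscillator estimates
`(∑_{α,β} (2|β|+d₁)^{2N₁} (2|α|+d₂)^{2N₂} |c(α,β)|²)^{1/2} ≤ C h^{N₁+N₂} (N₁!N₂!)^{2s}`
for all `N₁, N₂ ≥ 0`, then the joint estimate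
`(∑_{α,β} (2|α|+2|β|+d₁+d₂)^{2N} |c(α,β)|²)^{1/2} ≤ C (2h)^N (N!)^{2s}`
holds for every `N ≥ 0`. -/
theorem stmt19
    (s : ℝ) (hs : 0 < s) (d₁ d₂ : ℕ) (hd₁ : 1 ≤ d₁) (hd₂ : 1 ≤ d₂)
    (C h : ℝ) (hC : 0 < C) (hh : 0 < h)
    (c : (Fin d₂ → ℕ) → (Fin d₁ → ℕ) → ℂ)
    (hc : ∀ N₁ N₂ : ℕ,
      Summable (fun p : (Fin d₂ → ℕ) × (Fin d₁ → ℕ) =>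
        (2 * msz p.2 + d₁) ^ (2*N₁) * (2 * msz p.1 + d₂) ^ (2*N₂) * ‖c p.1 p.2‖^2) ∧
      Real.sqrt (∑' p : (Fin d₂ → ℕ) × (Fin d₁ → ℕ),
          (2 * msz p.2 + d₁) ^ (2*N₁) * (2 * msz p.1 + d₂) ^ (2*N₂) * ‖c p.1 p.2‖^2)
        ≤ C * h ^ (N₁ + N₂) *
            ((Nat.factorial N₁ : ℝ) * (Nat.factorial N₂ : ℝ)) ^ (2*s)) :
    ∀ N : ℕ,
      Summable (fun p : (Fin d₂ → ℕ) × (Fin d₁ → ℕ) =>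
        (2 * msz p.1 + 2 * msz p.2 + d₁ + d₂) ^ (2*N) * ‖c p.1 p.2‖^2) ∧
      Real.sqrt (∑' p : (Fin d₂ → ℕ) × (Fin d₁ → ℕ),
          (2 * msz p.1 + 2 * msz p.2 + d₁ + d₂) ^ (2*N) * ‖c p.1 p.2‖^2)
        ≤ C * (2*h) ^ N * (Nat.factorial N : ℝ) ^ (2*s) :=
  stmt19_general s hs d₁ d₂ C h hC hh c hc
end
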